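/- Let Φ be a reduced crystallographic root system of type E₆ in a 6-dimensional real inner product space, with base e₁,…,e₆ whose Cartan matrix has C_{ii} = 2, off-diagonal entries C_{ij} = C_{ji} = −1 exactly for the pairs {1,2}, {2,3}, {1,4}, {4,5}, {1,6}, and all other off-diagonal entries 0 (so e₁ is the trivalent node). Let W₀ be the subgroup of the orthogonal group generated by the reflections s_{e₂},…,s_{e₆}. If v = Σᵢ αᵢ eᵢ and v′ = Σᵢ αᵢ′ eᵢ are roots of Φ with α₁ ≠ 0, then v′ lies in the W₀-orbit of v if and only if α₁′ = α₁. -/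

import Mathlib

open scoped BigOperators
open RealInnerProductSpace

/-- A reduced crystallographic root system `Φ` in a real inner product space. -/
structure IsReducedCrystallographicRootSystem
    {V : Type*} [NormedAddCommGroup V] [InnerProductSpace ℝ V] (Φ : Set V) : Prop where
  finite : Φ.Finite
  span_top : Submodule.span ℝ Φ = ⊤
  ne_zero : ∀ v ∈ Φ, v ≠ 0
  reduced : ∀ v ∈ Φ, ∀ t : ℝ, t • v ∈ Φ → t = 1 ∨ t = -1
  reflect_mem : ∀ v ∈ Φ, ∀ w ∈ Φ, w - (2 * ⟪v, w⟫ / ⟪v, v⟫) • v ∈ Φ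
  crystallographic : ∀ v ∈ Φ, ∀ w ∈ Φ, ∃ z : ℤ, 2 * ⟪v, w⟫ / ⟪v, v⟫ = (z : ℝ)

/-- `e` is a base (simple system) for the root system `Φ`: each `e i` is a root, the `e i`
are linearly independent, and every root is an integer combination of the `e i` with all
coefficients of the same sign. -/
structure IsBase {V : Type*} [NormedAddCommGroup V] [InnerProductSpace ℝ V]
    (Φ : Set V) {n : ℕ} (e : Fin n → V) : Prop where
  mem : ∀ i, e i ∈ Φ
  indep : LinearIndependent ℝ e
  coords : ∀ v ∈ Φ, ∃ α : Fin n → ℤ,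
    v = ∑ i, (α i : ℝ) • e i ∧ ((∀ i, 0 ≤ α i) ∨ (∀ i, α i ≤ 0))

/-- The edges of the Dynkin diagram of type `E₆` (0-indexed: `eᵢ` is index `i - 1`). -/
def dynkinEdges : Finset (Fin 6 × Fin 6) := {(0, 1), (1, 2), (0, 3), (3, 4), (0, 5)}

/-- The Cartan matrix of type `E₆` with the indicated Dynkin diagram. -/
def cartanMatrix (i j : Fin 6) : ℝ :=
  if i = j then 2
  else if (i, j) ∈ dynkinEdges ∨ (j, i) ∈ dynkinEdges then -1 else 0

/-! ### Auxiliary integer-coordinate layer -/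

/-- The integer Cartan matrix. -/
def CI (i j : Fin 6) : ℤ :=
  if i = j then 2
  else if (i, j) ∈ dynkinEdges ∨ (j, i) ∈ dynkinEdges then -1 else 0

theorem cartan_cast (i j : Fin 6) : cartanMatrix i j = ((CI i j : ℤ) : ℝ) := by
  unfold cartanMatrix CI; split_ifs <;> norm_num

/-- `(Cα)ⱼ`, the pairing of the `j`-th simple coroot with `α`. -/
def cd (j : Fin 6) (a : Fin 6 → ℤ) : ℤ :=
  2 * a j -
    (if j = 0 then a 1 + a 3 + a 5
     else if j = 1 then a 0 + a 2
     else if j = 2 then a 1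
     else if j = 3 then a 0 + a 4
     else if j = 4 then a 3
     else a 0)

theorem cd0 (a : Fin 6 → ℤ) : cd 0 a = 2 * a 0 - (a 1 + a 3 + a 5) := rfl
theorem cd1 (a : Fin 6 → ℤ) : cd 1 a = 2 * a 1 - (a 0 + a 2) := rfl
theorem cd2 (a : Fin 6 → ℤ) : cd 2 a = 2 * a 2 - a 1 := rfl
theorem cd3 (a : Fin 6 → ℤ) : cd 3 a = 2 * a 3 - (a 0 + a 4) := rfl
theorem cd4 (a : Fin 6 → ℤ) : cd 4 a = 2 * a 4 - a 3 := rfl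
theorem cd5 (a : Fin 6 → ℤ) : cd 5 a = 2 * a 5 - a 0 := rfl

/-- The `E₆` quadratic form `αᵀCα`. -/
def qf (a : Fin 6 → ℤ) : ℤ :=
  2 * (a 0 * a 0 + a 1 * a 1 + a 2 * a 2 + a 3 * a 3 + a 4 * a 4 + a 5 * a 5) -
    2 * (a 0 * a 1 + a 1 * a 2 + a 0 * a 3 + a 3 * a 4 + a 0 * a 5)

theorem qf_cd (a : Fin 6 → ℤ) : qf a =
    a 0 * cd 0 a + a 1 * cd 1 a + a 2 * cd 2 a + a 3 * cd 3 a + a 4 * cd 4 a + a 5 * cd 5 a := by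
  simp only [qf, cd0, cd1, cd2, cd3, cd4, cd5]; ring

/-- The quadratic form of the adjugate of the `E₆` Cartan matrix. -/
def qA (z : Fin 6 → ℤ) : ℤ :=
  18*z 0*z 0 + 10*z 1*z 1 + 4*z 2*z 2 + 10*z 3*z 3 + 4*z 4*z 4 + 6*z 5*z 5
  + 2*(12*z 0*z 1 + 6*z 0*z 2 + 12*z 0*z 3 + 6*z 0*z 4 + 9*z 0*z 5
       + 5*z 1*z 2 + 8*z 1*z 3 + 4*z 1*z 4 + 6*z 1*z 5
       + 4*z 2*z 3 + 2*z 2*z 4 + 3*z 2*z 5 + 5*z 3*z 4 + 6*z 3*z 5 + 3*z 4*z 5)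

def mk6 (x0 x1 x2 x3 x4 x5 : ℤ) : Fin 6 → ℤ := ![x0, x1, x2, x3, x4, x5]

theorem mk6_eta (a : Fin 6 → ℤ) : mk6 (a 0) (a 1) (a 2) (a 3) (a 4) (a 5) = a := by
  funext i; fin_cases i <;> rfl

/-- Simple reflection `s_j` acting on coordinates. -/
def Sstep (j : Fin 6) (a : Fin 6 → ℤ) : Fin 6 → ℤ :=
  fun i => a i - (if i = j then cd j a else 0)

def normStep (a : Fin 6 → ℤ) : Fin 6 → ℤ :=
  if cd 1 a < 0 then Sstep 1 a
  else if cd 2 a < 0 then Sstep 2 a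
  else if cd 3 a < 0 then Sstep 3 a
  else if cd 4 a < 0 then Sstep 4 a
  else if cd 5 a < 0 then Sstep 5 a
  else a

def normIter : ℕ → (Fin 6 → ℤ) → (Fin 6 → ℤ)
  | 0, a => a
  | n + 1, a => normIter n (normStep a)

def repv (c : ℤ) : Fin 6 → ℤ :=
  if c = 1 then ![1, 1, 1, 1, 1, 1]
  else if c = 2 then ![2, 2, 1, 2, 1, 1]
  else if c = 3 then ![3, 2, 1, 2, 1, 2]
  else if c = -1 then ![-1, 0, 0, 0, 0, 0]
  else if c = -2 then ![-2, -1, 0, -1, 0, -1]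
  else ![-3, -2, -1, -2, -1, -1]

set_option maxRecDepth 10000 in
set_option maxHeartbeats 1000000 in
theorem dual_decide : ∀ t : Fin 6 → Fin 3,
    (∀ i, ((t i : ℕ) : ℤ) - 1 = 0) ∨ 4 ≤ qA (fun i => ((t i : ℕ) : ℤ) - 1) := by
  decide

set_option maxRecDepth 100000 in
set_option maxHeartbeats 6000000 in
theorem main_decide : ∀ (t0 : Fin 7) (t1 : Fin 5) (t2 : Fin 3) (t3 : Fin 5) (t4 : Fin 3)
    (t5 : Fin 5),
    qf (mk6 (((t0 : ℕ) : ℤ) - 3) (((t1 : ℕ) : ℤ) - 2) (((t2 : ℕ) : ℤ) - 1) (((t3 : ℕ) : ℤ) - 2)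
        (((t4 : ℕ) : ℤ) - 1) (((t5 : ℕ) : ℤ) - 2)) = 2 →
    (mk6 (((t0 : ℕ) : ℤ) - 3) (((t1 : ℕ) : ℤ) - 2) (((t2 : ℕ) : ℤ) - 1) (((t3 : ℕ) : ℤ) - 2)
        (((t4 : ℕ) : ℤ) - 1) (((t5 : ℕ) : ℤ) - 2) 0 = 0 ∨
      normIter 8 (mk6 (((t0 : ℕ) : ℤ) - 3) (((t1 : ℕ) : ℤ) - 2) (((t2 : ℕ) : ℤ) - 1)
          (((t3 : ℕ) : ℤ) - 2) (((t4 : ℕ) : ℤ) - 1) (((t5 : ℕ) : ℤ) - 2)) =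
        repv (mk6 (((t0 : ℕ) : ℤ) - 3) (((t1 : ℕ) : ℤ) - 2) (((t2 : ℕ) : ℤ) - 1)
          (((t3 : ℕ) : ℤ) - 2) (((t4 : ℕ) : ℤ) - 1) (((t5 : ℕ) : ℤ) - 2) 0)) := by
  decide

set_option maxHeartbeats 1000000 in
/-- `z` lies in the ±1 box when `qA z ≤ 3`. -/
theorem z_box (z : Fin 6 → ℤ) (h : qA z ≤ 3) :
    (-1 ≤ z 0 ∧ z 0 ≤ 1) ∧ (-1 ≤ z 1 ∧ z 1 ≤ 1) ∧ (-1 ≤ z 2 ∧ z 2 ≤ 1) ∧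
    (-1 ≤ z 3 ∧ z 3 ≤ 1) ∧ (-1 ≤ z 4 ∧ z 4 ≤ 1) ∧ (-1 ≤ z 5 ∧ z 5 ≤ 1) := by
  have hqa : qA z = 18*z 0*z 0 + 10*z 1*z 1 + 4*z 2*z 2 + 10*z 3*z 3 + 4*z 4*z 4 + 6*z 5*z 5
      + 2*(12*z 0*z 1 + 6*z 0*z 2 + 12*z 0*z 3 + 6*z 0*z 4 + 9*z 0*z 5
       + 5*z 1*z 2 + 8*z 1*z 3 + 4*z 1*z 4 + 6*z 1*z 5
       + 4*z 2*z 3 + 2*z 2*z 4 + 3*z 2*z 5 + 5*z 3*z 4 + 6*z 3*z 5 + 3*z 4*z 5) := rfl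
  rw [hqa] at h
  have h0 : 3 * (z 0)^2 ≤ 6 := by
    nlinarith [sq_nonneg (11*z 0+8*z 1+4*z 2+8*z 3+4*z 4+6*z 5),
      sq_nonneg (14*z 1+7*z 2-8*z 3-4*z 4-6*z 5), sq_nonneg (z 2),
      sq_nonneg (2*z 3+z 4-2*z 5), sq_nonneg (z 4)]
  have h1 : 3 * (z 1)^2 ≤ 6 := by
    nlinarith [sq_nonneg (6*z 0+4*z 1+2*z 2+4*z 3+2*z 4+3*z 5), sq_nonneg (z 1+2*z 2),
      sq_nonneg (2*z 3+z 4), sq_nonneg (z 4), sq_nonneg (z 5)]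
  have h2 : 3 * (z 2)^2 ≤ 6 := by
    nlinarith [sq_nonneg (6*z 0+4*z 1+2*z 2+4*z 3+2*z 4+3*z 5), sq_nonneg (2*z 1+z 2),
      sq_nonneg (2*z 3+z 4), sq_nonneg (z 4), sq_nonneg (z 5)]
  have h3 : 3 * (z 3)^2 ≤ 6 := by
    nlinarith [sq_nonneg (6*z 0+4*z 1+2*z 2+4*z 3+2*z 4+3*z 5), sq_nonneg (2*z 1+z 2),
      sq_nonneg (z 2), sq_nonneg (z 3+2*z 4), sq_nonneg (z 5)]
  have h4 : 3 * (z 4)^2 ≤ 6 := by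
    nlinarith [sq_nonneg (6*z 0+4*z 1+2*z 2+4*z 3+2*z 4+3*z 5), sq_nonneg (2*z 1+z 2),
      sq_nonneg (z 2), sq_nonneg (2*z 3+z 4), sq_nonneg (z 5)]
  have h5 : 3 * (z 5)^2 ≤ 6 := by
    nlinarith [sq_nonneg (6*z 0+4*z 1+2*z 2+4*z 3+2*z 4+3*z 5), sq_nonneg (2*z 1+z 2),
      sq_nonneg (z 2), sq_nonneg (2*z 3+z 4), sq_nonneg (z 4)]
  refine ⟨⟨?_, ?_⟩, ⟨?_, ?_⟩, ⟨?_, ?_⟩, ⟨?_, ?_⟩, ⟨?_, ?_⟩, ⟨?_, ?_⟩⟩ <;> nlinarith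

set_option maxHeartbeats 1000000 in
/-- Coordinate bounds for roots. -/
theorem a_box (a : Fin 6 → ℤ) (h : qf a = 2) :
    (-3 ≤ a 0 ∧ a 0 ≤ 3) ∧ (-2 ≤ a 1 ∧ a 1 ≤ 2) ∧ (-1 ≤ a 2 ∧ a 2 ≤ 1) ∧
    (-2 ≤ a 3 ∧ a 3 ≤ 2) ∧ (-1 ≤ a 4 ∧ a 4 ≤ 1) ∧ (-2 ≤ a 5 ∧ a 5 ≤ 2) := by
  have hq : 2 * (a 0 * a 0 + a 1 * a 1 + a 2 * a 2 + a 3 * a 3 + a 4 * a 4 + a 5 * a 5) -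
      2 * (a 0 * a 1 + a 1 * a 2 + a 0 * a 3 + a 3 * a 4 + a 0 * a 5) = 2 := h
  have h0 : 3 * (a 0)^2 ≤ 36 := by
    nlinarith [sq_nonneg (11*a 0-6*a 1-6*a 3-6*a 5), sq_nonneg (16*a 1-11*a 2-6*a 3-6*a 5),
      sq_nonneg (7*a 2-2*a 3-2*a 5), sq_nonneg (8*a 3-7*a 4-6*a 5), sq_nonneg (3*a 4-2*a 5)]
  have h1 : 3 * (a 1)^2 ≤ 20 := by
    nlinarith [sq_nonneg (2*a 0-a 1-a 3-a 5), sq_nonneg (12*a 1-10*a 2-5*a 3-5*a 5),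
      sq_nonneg (14*a 2-5*a 3-5*a 5), sq_nonneg (8*a 3-7*a 4-6*a 5), sq_nonneg (3*a 4-2*a 5)]
  have h2 : 3 * (a 2)^2 ≤ 8 := by
    nlinarith [sq_nonneg (2*a 0-a 1-a 3-a 5), sq_nonneg (3*a 1-2*a 2-a 3-a 5),
      sq_nonneg (7*a 2-4*a 3-4*a 5), sq_nonneg (8*a 3-7*a 4-6*a 5), sq_nonneg (3*a 4-2*a 5)]
  have h3 : 3 * (a 3)^2 ≤ 20 := by
    nlinarith [sq_nonneg (2*a 0-a 1-a 3-a 5), sq_nonneg (3*a 1-2*a 2-a 3-a 5),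
      sq_nonneg (4*a 2-a 3-a 5), sq_nonneg (19*a 3-20*a 4-15*a 5), sq_nonneg (6*a 4-5*a 5)]
  have h4 : 3 * (a 4)^2 ≤ 8 := by
    nlinarith [sq_nonneg (2*a 0-a 1-a 3-a 5), sq_nonneg (3*a 1-2*a 2-a 3-a 5),
      sq_nonneg (4*a 2-a 3-a 5), sq_nonneg (5*a 3-4*a 4-3*a 5), sq_nonneg (3*a 4-4*a 5)]
  have h5 : 3 * (a 5)^2 ≤ 12 := by
    nlinarith [sq_nonneg (2*a 0-a 1-a 3-a 5), sq_nonneg (3*a 1-2*a 2-a 3-a 5),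
      sq_nonneg (4*a 2-a 3-a 5), sq_nonneg (5*a 3-4*a 4-3*a 5), sq_nonneg (2*a 4-a 5)]
  refine ⟨⟨?_, ?_⟩, ⟨?_, ?_⟩, ⟨?_, ?_⟩, ⟨?_, ?_⟩, ⟨?_, ?_⟩, ⟨?_, ?_⟩⟩ <;> nlinarith

set_option maxHeartbeats 1000000 in
/-- Key arithmetic lemma: a vector with positive `qf` value satisfying the crystallographic
divisibility conditions has `qf` value `2`. -/
theorem key_int (a z : Fin 6 → ℤ) (hN : 0 < qf a)
    (hz : ∀ i, 2 * cd i a = z i * qf a) : qf a = 2 := by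
  have h0 := hz 0; have h1 := hz 1; have h2 := hz 2
  have h3 := hz 3; have h4 := hz 4; have h5 := hz 5
  rw [cd0] at h0; rw [cd1] at h1; rw [cd2] at h2
  rw [cd3] at h3; rw [cd4] at h4; rw [cd5] at h5
  have hqf : qf a = 2 * (a 0 * a 0 + a 1 * a 1 + a 2 * a 2 + a 3 * a 3 + a 4 * a 4 + a 5 * a 5) -
      2 * (a 0 * a 1 + a 1 * a 2 + a 0 * a 3 + a 3 * a 4 + a 0 * a 5) := rfl
  rw [hqf] at h0 h1 h2 h3 h4 h5 hN ⊢
  set Q := 2 * (a 0 * a 0 + a 1 * a 1 + a 2 * a 2 + a 3 * a 3 + a 4 * a 4 + a 5 * a 5) -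
      2 * (a 0 * a 1 + a 1 * a 2 + a 0 * a 3 + a 3 * a 4 + a 0 * a 5) with hQ
  have haz : Q * (a 0 * z 0 + a 1 * z 1 + a 2 * z 2 + a 3 * z 3 + a 4 * z 4 + a 5 * z 5 - 2)
      = 0 := by
    linear_combination (-(a 0)) * h0 - (a 1) * h1 - (a 2) * h2 - (a 3) * h3 - (a 4) * h4 -
      (a 5) * h5
  have hS : a 0 * z 0 + a 1 * z 1 + a 2 * z 2 + a 3 * z 3 + a 4 * z 4 + a 5 * z 5 = 2 := by
    rcases mul_eq_zero.1 haz with h | h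
    · exact absurd h hN.ne'
    · linarith
  have g0 : Q * (18*z 0+12*z 1+6*z 2+12*z 3+6*z 4+9*z 5) = 6 * a 0 := by
    linear_combination (-18)*h0 - 12*h1 - 6*h2 - 12*h3 - 6*h4 - 9*h5
  have g1 : Q * (12*z 0+10*z 1+5*z 2+8*z 3+4*z 4+6*z 5) = 6 * a 1 := by
    linear_combination (-12)*h0 - 10*h1 - 5*h2 - 8*h3 - 4*h4 - 6*h5
  have g2 : Q * (6*z 0+5*z 1+4*z 2+4*z 3+2*z 4+3*z 5) = 6 * a 2 := by
    linear_combination (-6)*h0 - 5*h1 - 4*h2 - 4*h3 - 2*h4 - 3*h5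
  have g3 : Q * (12*z 0+8*z 1+4*z 2+10*z 3+5*z 4+6*z 5) = 6 * a 3 := by
    linear_combination (-12)*h0 - 8*h1 - 4*h2 - 10*h3 - 5*h4 - 6*h5
  have g4 : Q * (6*z 0+4*z 1+2*z 2+5*z 3+4*z 4+3*z 5) = 6 * a 4 := by
    linear_combination (-6)*h0 - 4*h1 - 2*h2 - 5*h3 - 4*h4 - 3*h5
  have g5 : Q * (9*z 0+6*z 1+3*z 2+6*z 3+3*z 4+6*z 5) = 6 * a 5 := by
    linear_combination (-9)*h0 - 6*h1 - 3*h2 - 6*h3 - 3*h4 - 6*h5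
  have hqa : qA z = 18*z 0*z 0 + 10*z 1*z 1 + 4*z 2*z 2 + 10*z 3*z 3 + 4*z 4*z 4 + 6*z 5*z 5
      + 2*(12*z 0*z 1 + 6*z 0*z 2 + 12*z 0*z 3 + 6*z 0*z 4 + 9*z 0*z 5
       + 5*z 1*z 2 + 8*z 1*z 3 + 4*z 1*z 4 + 6*z 1*z 5
       + 4*z 2*z 3 + 2*z 2*z 4 + 3*z 2*z 5 + 5*z 3*z 4 + 6*z 3*z 5 + 3*z 4*z 5) := rfl
  have hQqa : Q * qA z = 12 := by
    linear_combination (z 0)*g0 + (z 1)*g1 + (z 2)*g2 + (z 3)*g3 + (z 4)*g4 + (z 5)*g5 +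
      6*hS + Q*hqa
  obtain ⟨M, hQM⟩ : ∃ M, Q = 2 * M :=
    ⟨(a 0 * a 0 + a 1 * a 1 + a 2 * a 2 + a 3 * a 3 + a 4 * a 4 + a 5 * a 5) -
      (a 0 * a 1 + a 1 * a 2 + a 0 * a 3 + a 3 * a 4 + a 0 * a 5), by rw [hQ]; ring⟩
  rw [hQM] at hQqa hN ⊢
  have hMpos : 0 < M := by linarith
  have h6 : M * qA z = 6 := by linarith [hQqa]
  rcases (by omega : M = 1 ∨ 2 ≤ M) with hM1 | hM2
  · rw [hM1]; norm_num
  · exfalso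
    have hqa0 : 0 ≤ qA z := by
      nlinarith [sq_nonneg (6*z 0+4*z 1+2*z 2+4*z 3+2*z 4+3*z 5), sq_nonneg (2*z 1+z 2),
        sq_nonneg (z 2), sq_nonneg (2*z 3+z 4), sq_nonneg (z 4), sq_nonneg (z 5), hqa]
    have hqale : qA z ≤ 3 := by linarith [mul_nonneg (by linarith : (0:ℤ) ≤ M - 2) hqa0]
    obtain ⟨⟨b0, b0'⟩, ⟨b1, b1'⟩, ⟨b2, b2'⟩, ⟨b3, b3'⟩, ⟨b4, b4'⟩, ⟨b5, b5'⟩⟩ := z_box z hqale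
    have hbox : ∀ i, -1 ≤ z i ∧ z i ≤ 1 := by
      intro i; fin_cases i <;> exact ⟨by assumption, by assumption⟩
    set t : Fin 6 → Fin 3 := fun i => ⟨(z i + 1).toNat, by have := hbox i; omega⟩ with ht
    have hti : ∀ i, ((t i : ℕ) : ℤ) = z i + 1 := by
      intro i; have := hbox i; simp only [ht, Fin.val_mk]
      rw [Int.toNat_of_nonneg (by omega)]
    have heq : (fun i => ((t i : ℕ) : ℤ) - 1) = z := by
      funext i; rw [hti i]; ring
    rcases dual_decide t with hzero | hge
    · have hz0 : ∀ i, z i = 0 := by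
        intro i; have h' := hzero i; rw [hti i] at h'; omega
      rw [hz0 0, hz0 1, hz0 2, hz0 3, hz0 4, hz0 5] at hS
      simp at hS
    · rw [heq] at hge
      linarith

/-- One step of the `W₀`-action in coordinates. -/
def StepRel (a b : Fin 6 → ℤ) : Prop := ∃ j : Fin 6, j ≠ 0 ∧ b = Sstep j a

theorem Sstep_invol (j : Fin 6) (a : Fin 6 → ℤ) : Sstep j (Sstep j a) = a := by
  have hcd : cd j (Sstep j a) = - cd j a := by
    fin_cases j <;>
      simp (config := { decide := true }) [cd, Sstep] <;> ring
  funext i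
  by_cases h : i = j
  · subst h; simp [Sstep, hcd]
  · simp [Sstep, h]

theorem stepRel_symm : ∀ {a b}, StepRel a b → StepRel b a := by
  rintro a b ⟨j, hj, rfl⟩
  exact ⟨j, hj, (Sstep_invol j a).symm⟩

theorem reach_normStep (a : Fin 6 → ℤ) : Relation.ReflTransGen StepRel a (normStep a) := by
  rw [normStep]
  split_ifs <;> first
    | exact Relation.ReflTransGen.single ⟨_, by decide, rfl⟩
    | exact Relation.ReflTransGen.refl

theorem reach_normIter (n : ℕ) (a : Fin 6 → ℤ) :
    Relation.ReflTransGen StepRel a (normIter n a) := by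
  induction n generalizing a with
  | zero => exact Relation.ReflTransGen.refl
  | succ n ih => exact (reach_normStep a).trans (ih (normStep a))

theorem refl_formula {V : Type*} [NormedAddCommGroup V] [InnerProductSpace ℝ V]
    [FiniteDimensional ℝ V] (u : V) (hu : u ≠ 0) (x : V) :
    Submodule.reflection ((Submodule.span ℝ {u})ᗮ) x = x - (2 * ⟪u, x⟫ / ⟪u, u⟫) • u := by
  have h1 : ‖u‖ ≠ 0 := norm_ne_zero_iff.2 hu
  rw [Submodule.reflection_apply, Submodule.starProjection_orthogonal_val,
    Submodule.starProjection_singleton,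
    real_inner_self_eq_norm_sq, two_smul]
  have h2 : (RCLike.ofReal (‖u‖ ^ 2) : ℝ) = ‖u‖ ^ 2 := rfl
  rw [h2]
  match_scalars <;> field_simp <;> ring

theorem toV_Sstep {V : Type*} [NormedAddCommGroup V] [InnerProductSpace ℝ V]
    (e : Fin 6 → V) (j : Fin 6) (a : Fin 6 → ℤ) :
    (∑ i, ((Sstep j a i : ℤ) : ℝ) • e i) = (∑ i, (a i : ℝ) • e i) - (cd j a : ℝ) • e j := by
  fin_cases j <;>
    · simp (config := { decide := true }) only [Sstep, Fin.sum_univ_six, Fin.reduceFinMk,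
        Fin.isValue]
      push_cast
      module

/-- Lemma 2.4 (E₆ case). -/
theorem statement4
    {V : Type*} [NormedAddCommGroup V] [InnerProductSpace ℝ V] [FiniteDimensional ℝ V]
    (hdim : Module.finrank ℝ V = 6)
    (Φ : Set V) (hΦ : IsReducedCrystallographicRootSystem Φ)
    (e : Fin 6 → V) (hbase : IsBase Φ e)
    (hC : ∀ i j, 2 * ⟪e i, e j⟫ / ⟪e j, e j⟫ = cartanMatrix i j)
    (W₀ : Subgroup (V ≃ₗᵢ[ℝ] V))
    (hW₀ : W₀ = Subgroup.closure
      {w | ∃ j : Fin 6, j ≠ 0 ∧ w = Submodule.reflection ((Submodule.span ℝ {e j})ᗮ)})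
    (α α' : Fin 6 → ℤ)
    (hv : (∑ i, (α i : ℝ) • e i) ∈ Φ) (hv' : (∑ i, (α' i : ℝ) • e i) ∈ Φ)
    (hα : α 0 ≠ 0) :
    (∃ w ∈ W₀, w (∑ i, (α i : ℝ) • e i) = ∑ i, (α' i : ℝ) • e i) ↔ α' 0 = α 0 := by
  classical
  have hne : ∀ i, e i ≠ 0 := fun i => hΦ.ne_zero _ (hbase.mem i)
  have hpos : ∀ i, (0:ℝ) < ⟪e i, e i⟫ := fun i =>
    lt_of_le_of_ne real_inner_self_nonneg
      (fun h => (hne i) (inner_self_eq_zero.1 h.symm))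
  set l := ⟪e 0, e 0⟫ with hl_def
  have hl : 0 < l := hpos 0
  have hC' : ∀ i j, 2 * ⟪e i, e j⟫ = ((CI i j : ℤ) : ℝ) * ⟪e j, e j⟫ := by
    intro i j
    have h := hC i j
    rw [div_eq_iff (hpos j).ne', cartan_cast] at h
    exact h
  have hlen : ∀ i j : Fin 6, CI i j = -1 → CI j i = -1 → ⟪e i, e i⟫ = ⟪e j, e j⟫ := by
    intro i j hijm hjim
    have h1 := hC' i j; have h2 := hC' j i
    rw [hijm] at h1; rw [hjim] at h2
    rw [real_inner_comm (e i) (e j)] at h2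
    push_cast at h1 h2
    linarith
  have hdiag : ∀ i, ⟪e i, e i⟫ = l := by
    have h1 := hlen 1 0 (by decide) (by decide)
    have h2 := hlen 2 1 (by decide) (by decide)
    have h3 := hlen 3 0 (by decide) (by decide)
    have h4 := hlen 4 3 (by decide) (by decide)
    have h5 := hlen 5 0 (by decide) (by decide)
    intro i
    fin_cases i
    · rfl
    · exact h1
    · exact h2.trans h1
    · exact h3
    · exact h4.trans h3
    · exact h5
  have hij : ∀ i j, ⟪e i, e j⟫ = ((CI i j : ℤ) : ℝ) * l / 2 := by
    intro i j
    have h := hC' i j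
    rw [hdiag j] at h
    linarith
  have hvj : ∀ (a : Fin 6 → ℤ) (j : Fin 6),
      2 * ⟪∑ i, (a i : ℝ) • e i, e j⟫ = (cd j a : ℝ) * l := by
    intro a j
    rw [sum_inner]
    simp only [real_inner_smul_left, hij]
    fin_cases j <;> simp only [Fin.reduceFinMk, Fin.isValue]
    · rw [cd0]; push_cast
      simp (config := { decide := true }) [Fin.sum_univ_six, CI, dynkinEdges]; ring
    · rw [cd1]; push_cast
      simp (config := { decide := true }) [Fin.sum_univ_six, CI, dynkinEdges]; ring
    · rw [cd2]; push_cast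
      simp (config := { decide := true }) [Fin.sum_univ_six, CI, dynkinEdges]; ring
    · rw [cd3]; push_cast
      simp (config := { decide := true }) [Fin.sum_univ_six, CI, dynkinEdges]; ring
    · rw [cd4]; push_cast
      simp (config := { decide := true }) [Fin.sum_univ_six, CI, dynkinEdges]; ring
    · rw [cd5]; push_cast
      simp (config := { decide := true }) [Fin.sum_univ_six, CI, dynkinEdges]; ring
  have hvv : ∀ a : Fin 6 → ℤ,
      2 * ⟪∑ i, (a i : ℝ) • e i, ∑ i, (a i : ℝ) • e i⟫ = (qf a : ℝ) * l := by
    intro a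
    have h0 := hvj a 0; have h1 := hvj a 1; have h2 := hvj a 2
    have h3 := hvj a 3; have h4 := hvj a 4; have h5 := hvj a 5
    rw [inner_sum]
    simp only [real_inner_smul_right]
    rw [Fin.sum_univ_six]
    rw [qf_cd]
    push_cast
    linear_combination (a 0 : ℝ) * h0 + (a 1 : ℝ) * h1 + (a 2 : ℝ) * h2 + (a 3 : ℝ) * h3 +
      (a 4 : ℝ) * h4 + (a 5 : ℝ) * h5
  -- every root has qf value 2
  have hq2 : ∀ a : Fin 6 → ℤ, (∑ i, (a i : ℝ) • e i) ∈ Φ → qf a = 2 := by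
    intro a ha
    have hw0 : (∑ i, (a i : ℝ) • e i) ≠ 0 := hΦ.ne_zero _ ha
    have hwpos : (0:ℝ) < ⟪∑ i, (a i : ℝ) • e i, ∑ i, (a i : ℝ) • e i⟫ :=
      lt_of_le_of_ne real_inner_self_nonneg (fun h => hw0 (inner_self_eq_zero.1 h.symm))
    have hvva := hvv a
    have hqpos : 0 < qf a := by
      have : (0:ℝ) < (qf a : ℝ) := by nlinarith
      exact_mod_cast this
    have hzz : ∀ i : Fin 6, ∃ zi : ℤ, 2 * cd i a = zi * qf a := by
      intro i
      obtain ⟨zi, hzi⟩ := hΦ.crystallographic _ ha (e i) (hbase.mem i)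
      rw [div_eq_iff hwpos.ne'] at hzi
      have h1 := hvj a i
      refine ⟨zi, ?_⟩
      have hreal : ((2 * cd i a : ℤ) : ℝ) * l = ((zi * qf a : ℤ) : ℝ) * l := by
        push_cast
        linear_combination (-2 : ℝ) * h1 + (zi : ℝ) * hvva + 2 * hzi
      have := mul_right_cancel₀ hl.ne' hreal
      exact_mod_cast this
    choose zfun hzf using hzz
    exact key_int a zfun hqpos hzf
  -- reflections act on coordinates as Sstep
  have refl_toV : ∀ (j : Fin 6) (a : Fin 6 → ℤ),
      Submodule.reflection ((Submodule.span ℝ {e j})ᗮ) (∑ i, (a i : ℝ) • e i) =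
        ∑ i, ((Sstep j a i : ℤ) : ℝ) • e i := by
    intro j a
    rw [refl_formula (e j) (hne j), toV_Sstep e j a]
    have hcoef : 2 * ⟪e j, ∑ i, (a i : ℝ) • e i⟫ / ⟪e j, e j⟫ = (cd j a : ℝ) := by
      rw [real_inner_comm, hdiag j]
      have := hvj a j
      field_simp
      linarith
    rw [hcoef]
  -- lifting reachability to W₀
  have lift : ∀ b : Fin 6 → ℤ, Relation.ReflTransGen StepRel α b →
      ∃ w ∈ W₀, w (∑ i, (α i : ℝ) • e i) = ∑ i, ((b i : ℤ) : ℝ) • e i := by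
    intro b h
    induction h with
    | refl => exact ⟨1, one_mem _, rfl⟩
    | tail hab hbc ih =>
      obtain ⟨w, hwW, hw⟩ := ih
      obtain ⟨j, hj, rfl⟩ := hbc
      refine ⟨Submodule.reflection ((Submodule.span ℝ {e j})ᗮ) * w, ?_, ?_⟩
      · refine mul_mem ?_ hwW
        rw [hW₀]
        exact Subgroup.subset_closure ⟨j, hj, rfl⟩
      · have : (Submodule.reflection ((Submodule.span ℝ {e j})ᗮ) * w) (∑ i, (α i : ℝ) • e i) =
            Submodule.reflection ((Submodule.span ℝ {e j})ᗮ) (w (∑ i, (α i : ℝ) • e i)) := rfl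
        rw [this, hw, refl_toV]
  -- the coordinate functional
  have hcard : Fintype.card (Fin 6) = Module.finrank ℝ V := by rw [hdim, Fintype.card_fin]
  set b : Module.Basis (Fin 6) ℝ V := basisOfLinearIndependentOfCardEqFinrank hbase.indep hcard
    with hb_def
  have hb : ⇑b = e := coe_basisOfLinearIndependentOfCardEqFinrank _ _
  set f : V →ₗ[ℝ] ℝ := b.coord 0 with hf_def
  have hfe : ∀ j : Fin 6, f (e j) = if j = 0 then 1 else 0 := by
    intro j
    rw [← hb]
    rw [hf_def, Module.Basis.coord_apply, Module.Basis.repr_self]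
    rw [Finsupp.single_apply]
  have hfv : ∀ a : Fin 6 → ℤ, f (∑ i, (a i : ℝ) • e i) = (a 0 : ℝ) := by
    intro a
    rw [map_sum]
    simp only [map_smul, hfe, smul_eq_mul]
    rw [Fin.sum_univ_six]
    simp (config := { decide := true })
  constructor
  · -- forward: the orbit preserves the coefficient of e 0
    rintro ⟨w, hwW, hw⟩
    set U : Submodule ℝ V := Submodule.span ℝ (e '' {j | j ≠ 0}) with hU_def
    have hinv : ∀ w' ∈ W₀, ∀ x : V, w' x - x ∈ U := by
      intro w' hw'
      rw [hW₀] at hw'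
      induction hw' using Subgroup.closure_induction with
      | mem g hg =>
        obtain ⟨j, hj, rfl⟩ := hg
        intro x
        rw [refl_formula (e j) (hne j) x]
        have : x - (2 * ⟪e j, x⟫ / ⟪e j, e j⟫) • e j - x
            = -((2 * ⟪e j, x⟫ / ⟪e j, e j⟫) • e j) := by abel
        rw [this]
        exact neg_mem (Submodule.smul_mem _ _ (Submodule.subset_span ⟨j, hj, rfl⟩))
      | one =>
        intro x
        simp
      | mul g₁ g₂ hg₁ hg₂ ih₁ ih₂ =>
        intro x
        have : (g₁ * g₂) x - x = (g₁ (g₂ x) - g₂ x) + (g₂ x - x) := by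
          simp [LinearIsometryEquiv.coe_mul]
        rw [this]
        exact add_mem (ih₁ (g₂ x)) (ih₂ x)
      | inv g hg ih =>
        intro x
        have h1 := ih (g⁻¹ x)
        have h2 : g (g⁻¹ x) = x := by
          simp
        rw [h2] at h1
        have : g⁻¹ x - x = -(x - g⁻¹ x) := by abel
        rw [this]
        exact neg_mem (by simpa using h1)
    have hUf : ∀ u ∈ U, f u = 0 := by
      intro u hu
      have hle : U ≤ LinearMap.ker f := by
        rw [hU_def, Submodule.span_le]
        rintro _ ⟨j, hj, rfl⟩
        simp only [SetLike.mem_coe, LinearMap.mem_ker]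
        rw [hfe j, if_neg hj]
      simpa using hle hu
    have hmem := hinv w hwW (∑ i, (α i : ℝ) • e i)
    rw [hw] at hmem
    have := hUf _ hmem
    rw [map_sub, hfv α', hfv α] at this
    have : (α' 0 : ℝ) = (α 0 : ℝ) := by linarith
    exact_mod_cast this
  · -- reverse: equal coefficients give reachability
    intro hc
    have hq := hq2 α hv
    have hq' := hq2 α' hv'
    have hnorm : ∀ a : Fin 6 → ℤ, qf a = 2 → a 0 ≠ 0 → normIter 8 a = repv (a 0) := by
      intro a ha h0
      obtain ⟨⟨b0, b0'⟩, ⟨b1, b1'⟩, ⟨b2, b2'⟩, ⟨b3, b3'⟩, ⟨b4, b4'⟩, ⟨b5, b5'⟩⟩ := a_box a ha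
      have h := main_decide ⟨(a 0 + 3).toNat, by omega⟩ ⟨(a 1 + 2).toNat, by omega⟩
        ⟨(a 2 + 1).toNat, by omega⟩ ⟨(a 3 + 2).toNat, by omega⟩
        ⟨(a 4 + 1).toNat, by omega⟩ ⟨(a 5 + 2).toNat, by omega⟩
      simp only [Fin.val_mk] at h
      rw [show (((a 0 + 3).toNat : ℕ) : ℤ) = a 0 + 3 from Int.toNat_of_nonneg (by omega),
        show (((a 1 + 2).toNat : ℕ) : ℤ) = a 1 + 2 from Int.toNat_of_nonneg (by omega),
        show (((a 2 + 1).toNat : ℕ) : ℤ) = a 2 + 1 from Int.toNat_of_nonneg (by omega),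
        show (((a 3 + 2).toNat : ℕ) : ℤ) = a 3 + 2 from Int.toNat_of_nonneg (by omega),
        show (((a 4 + 1).toNat : ℕ) : ℤ) = a 4 + 1 from Int.toNat_of_nonneg (by omega),
        show (((a 5 + 2).toNat : ℕ) : ℤ) = a 5 + 2 from Int.toNat_of_nonneg (by omega),
        show a 0 + 3 - 3 = a 0 from by ring, show a 1 + 2 - 2 = a 1 from by ring,
        show a 2 + 1 - 1 = a 2 from by ring, show a 3 + 2 - 2 = a 3 from by ring,
        show a 4 + 1 - 1 = a 4 from by ring, show a 5 + 2 - 2 = a 5 from by ring,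
        mk6_eta a] at h
      rcases h ha with h' | h'
      · exact absurd h' h0
      · exact h'
    have hnα := hnorm α hq hα
    have hnα' := hnorm α' hq' (by rw [hc]; exact hα)
    have hkey : normIter 8 α = normIter 8 α' := by rw [hnα, hnα', hc]
    have hreach : Relation.ReflTransGen StepRel α α' := by
      refine (reach_normIter 8 α).trans ?_
      rw [hkey]
      exact (@Relation.ReflTransGen.stdSymm _ StepRel ⟨fun x y h => stepRel_symm h⟩).symm _ _
        (reach_normIter 8 α')
    exact lift α' hreach
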